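/- In the eight-sector configuration, the area sum of the other set of alternative sectors satisfies S₂ + S₄ + S₆ + S₈ = (r₀²/2)·[sin 2(θ₃ − θ₀) − sin 2(θ₂ − θ₀) + sin 2(θ₁ − θ₀) − sin 2(θ₄ − θ₀)] + a²·(θ₃ − θ₂ + θ₁ + π − θ₄). -/

import Mathlib

open Real

lemma pair_sum (a r₀ θ₀ α β : ℝ) (hr₀ : 0 ≤ r₀) (hr₀a : r₀ ≤ a) (hab : α ≤ β) :
    ((1:ℝ) / 2) * (∫ θ in α..β,
      (r₀ * Real.cos (θ - θ₀) + Real.sqrt (a ^ 2 - r₀ ^ 2 * Real.sin (θ - θ₀) ^ 2)) ^ 2) +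
    (1 / 2) * (∫ θ in (α+π)..(β+π),
      (r₀ * Real.cos (θ - θ₀) + Real.sqrt (a ^ 2 - r₀ ^ 2 * Real.sin (θ - θ₀) ^ 2)) ^ 2) =
    a ^ 2 * (β - α) + r₀ ^ 2 / 2 * (Real.sin (2 * (β - θ₀)) - Real.sin (2 * (α - θ₀))) := by
  set f : ℝ → ℝ := fun θ =>
    (r₀ * Real.cos (θ - θ₀) + Real.sqrt (a ^ 2 - r₀ ^ 2 * Real.sin (θ - θ₀) ^ 2)) ^ 2 with hf
  have hcont : Continuous f := by fun_prop
  have hshift : (∫ θ in (α+π)..(β+π), f θ) = ∫ θ in α..β, f (θ + π) := by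
    rw [intervalIntegral.integral_comp_add_right]
  have hpt : ∀ θ : ℝ, f θ + f (θ + π) = 2 * a ^ 2 + 2 * r₀ ^ 2 * Real.cos (2 * (θ - θ₀)) := by
    intro θ
    have h1 : θ + π - θ₀ = (θ - θ₀) + π := by ring
    have hnn : 0 ≤ a ^ 2 - r₀ ^ 2 * Real.sin (θ - θ₀) ^ 2 := by
      have h2 : r₀ ^ 2 * Real.sin (θ - θ₀) ^ 2 ≤ a ^ 2 * 1 := by
        apply mul_le_mul (by nlinarith) (by nlinarith [Real.sin_sq_le_one (θ - θ₀)])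
          (sq_nonneg _) (by nlinarith)
      linarith
    have hsq := Real.sq_sqrt hnn
    rw [hf]
    simp only [h1, Real.cos_add_pi, Real.sin_add_pi, neg_sq]
    rw [Real.cos_two_mul]
    nlinarith [hsq, Real.sin_sq_add_cos_sq (θ - θ₀)]
  have hint1 : IntervalIntegrable f MeasureTheory.volume α β := hcont.intervalIntegrable _ _
  have hint2 : IntervalIntegrable (fun θ => f (θ + π)) MeasureTheory.volume α β :=
    (hcont.comp (by fun_prop)).intervalIntegrable _ _
  have hadd : (∫ θ in α..β, f θ) + (∫ θ in α..β, f (θ + π)) =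
      ∫ θ in α..β, (2 * a ^ 2 + 2 * r₀ ^ 2 * Real.cos (2 * (θ - θ₀))) := by
    rw [← intervalIntegral.integral_add hint1 hint2]
    exact intervalIntegral.integral_congr fun θ _ => hpt θ
  have hcalc : (∫ θ in α..β, (2 * a ^ 2 + 2 * r₀ ^ 2 * Real.cos (2 * (θ - θ₀)))) =
      (2 * a ^ 2 * β + r₀ ^ 2 * Real.sin (2 * (β - θ₀))) -
      (2 * a ^ 2 * α + r₀ ^ 2 * Real.sin (2 * (α - θ₀))) := by
    have : ∀ θ : ℝ, HasDerivAt (fun x => 2 * a ^ 2 * x + r₀ ^ 2 * Real.sin (2 * (x - θ₀)))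
        (2 * a ^ 2 + 2 * r₀ ^ 2 * Real.cos (2 * (θ - θ₀))) θ := by
      intro θ
      have h1 : HasDerivAt (fun x : ℝ => 2 * (x - θ₀)) 2 θ := by
        simpa using ((hasDerivAt_id θ).sub_const θ₀).const_mul 2
      have h2 : HasDerivAt (fun x : ℝ => Real.sin (2 * (x - θ₀)))
          (Real.cos (2 * (θ - θ₀)) * 2) θ := (Real.hasDerivAt_sin _).comp θ h1
      have h3 := ((hasDerivAt_id θ).const_mul (2 * a ^ 2)).add (h2.const_mul (r₀ ^ 2))
      exact h3.congr_deriv (by ring)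
    rw [intervalIntegral.integral_eq_sub_of_hasDerivAt (fun θ _ => this θ)
      (by apply Continuous.intervalIntegrable; fun_prop)]
  rw [hshift]
  have := hadd
  linarith [hadd, hcalc]

/-- Eight-sector configuration: the area sum of the other set of alternative sectors satisfies
S₂ + S₄ + S₆ + S₈ = (r₀²/2)[sin 2(θ₃−θ₀) − sin 2(θ₂−θ₀) + sin 2(θ₁−θ₀) − sin 2(θ₄−θ₀)]
                    + a²(θ₃ − θ₂ + θ₁ + π − θ₄). -/
theorem eight_sector_even_sum (a r₀ θ₀ θ₁ θ₂ θ₃ θ₄ : ℝ)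
    (ha : 0 < a) (hr₀ : 0 ≤ r₀) (hr₀a : r₀ ≤ a)
    (h12 : θ₁ < θ₂) (h23 : θ₂ < θ₃) (h34 : θ₃ < θ₄) (h41 : θ₄ < θ₁ + π)
    (S : ℝ → ℝ → ℝ)
    (hS : ∀ α β : ℝ, α ≤ β → S α β = (1 / 2) * ∫ θ in α..β,
      (r₀ * Real.cos (θ - θ₀) + Real.sqrt (a ^ 2 - r₀ ^ 2 * Real.sin (θ - θ₀) ^ 2)) ^ 2) :
    S θ₂ θ₃ + S θ₄ (θ₁ + π) + S (θ₂ + π) (θ₃ + π) + S (θ₄ + π) (θ₁ + 2 * π) =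
      r₀ ^ 2 / 2 * (Real.sin (2 * (θ₃ - θ₀)) - Real.sin (2 * (θ₂ - θ₀)) +
        Real.sin (2 * (θ₁ - θ₀)) - Real.sin (2 * (θ₄ - θ₀))) +
      a ^ 2 * (θ₃ - θ₂ + θ₁ + π - θ₄) := by
  have e1 : θ₁ + 2 * π = (θ₁ + π) + π := by ring
  rw [hS θ₂ θ₃ h23.le, hS θ₄ (θ₁ + π) h41.le,
    hS (θ₂ + π) (θ₃ + π) (by linarith), e1, hS (θ₄ + π) ((θ₁ + π) + π) (by linarith)]
  have p1 := pair_sum a r₀ θ₀ θ₂ θ₃ hr₀ hr₀a h23.le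
  have p2 := pair_sum a r₀ θ₀ θ₄ (θ₁ + π) hr₀ hr₀a h41.le
  have e2 : Real.sin (2 * (θ₁ + π - θ₀)) = Real.sin (2 * (θ₁ - θ₀)) := by
    have : 2 * (θ₁ + π - θ₀) = 2 * (θ₁ - θ₀) + 2 * π := by ring
    rw [this, Real.sin_add_two_pi]
  rw [e2] at p2
  linarith
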